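/- Let ι be a finite type, θ₀ ∈ ℝ, and q : ι → ℝ → ℝ such that for each x ∈ ι: q(x, θ) > 0 for θ in a neighborhood of θ₀, θ ↦ q(x, θ) is differentiable at θ₀, and ∑_{x ∈ ι} q(x, θ) = 1 for all θ in a neighborhood of θ₀. Then for any F : ι → ℝ, the function θ ↦ ∑_{x ∈ ι} q(x, θ)·(F(x) − log q(x, θ)) is differentiable at θ₀ with derivative ∑_{x ∈ ι} q(x, θ₀) · (d/dθ)|_{θ=θ₀} log q(x, θ) · (F(x) − log q(x, θ₀)). -/

import Mathlib

open Filter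

/-! The derivative of `q (F - log q)` is `q' (F - log q) - q'`, and the extra terms `-q'` sum to
zero because `∑ q = 1` near `θ₀`. Finally `q' = q · (log q)'`, the score-function form. -/

theorem HasDerivAt.mul_const_sub_log {f : ℝ → ℝ} {f' a : ℝ} (c : ℝ) (hf : HasDerivAt f f' a)
    (ha : f a ≠ 0) :
    HasDerivAt (fun t => f t * (c - Real.log (f t))) (f' * (c - Real.log (f a)) - f') a := by
  refine (hf.fun_mul ((hasDerivAt_const a c).fun_sub (hf.log ha))).congr_deriv ?_
  field_simp
  ring

theorem Finset.sum_deriv_eq_zero_of_sum_eventuallyEq_const {ι : Type*} {s : Finset ι}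
    {f : ι → ℝ → ℝ} {f' : ι → ℝ} {a c : ℝ} (hf : ∀ i ∈ s, HasDerivAt (f i) (f' i) a)
    (hsum : ∀ᶠ t in nhds a, ∑ i ∈ s, f i t = c) :
    ∑ i ∈ s, f' i = 0 :=
  (HasDerivAt.fun_sum hf).unique ((hasDerivAt_const a c).congr_of_eventuallyEq hsum)

theorem mul_deriv_log_eq_deriv {f : ℝ → ℝ} {a : ℝ} (hf : DifferentiableAt ℝ f a)
    (ha : f a ≠ 0) :
    f a * deriv (fun t => Real.log (f t)) a = deriv f a := by
  rw [deriv.log hf ha, mul_div_cancel₀ _ ha]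

/-- Likelihood-ratio (score function / REINFORCE) estimator identity for the ELBo gradient
(Equation 3 of the paper), finite-support case: the derivative of the ELBo
`θ ↦ ∑ x, q (x, θ) · (F x − log q (x, θ))` at `θ₀` equals
`∑ x, q (x, θ₀) · ∇_θ log q (x, θ₀) · (F x − log q (x, θ₀))`. -/
theorem likelihood_ratio_elbo_gradient {ι : Type*} [Fintype ι] (θ₀ : ℝ)
    (q : ι → ℝ → ℝ)
    (hpos : ∀ x, ∀ᶠ θ in nhds θ₀, 0 < q x θ)
    (hdiff : ∀ x, DifferentiableAt ℝ (fun θ => q x θ) θ₀)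
    (hnorm : ∀ᶠ θ in nhds θ₀, ∑ x, q x θ = 1) :
    ∀ F : ι → ℝ,
      HasDerivAt (fun θ => ∑ x, q x θ * (F x - Real.log (q x θ)))
        (∑ x, q x θ₀ * deriv (fun θ => Real.log (q x θ)) θ₀ * (F x - Real.log (q x θ₀)))
        θ₀ := by
  intro F
  have hq₀ : ∀ x, q x θ₀ ≠ 0 := fun x => (hpos x).self_of_nhds.ne'
  have hscore : ∑ x, deriv (q x) θ₀ = 0 :=
    Finset.sum_deriv_eq_zero_of_sum_eventuallyEq_const (fun x _ => (hdiff x).hasDerivAt) hnorm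
  have hsum := HasDerivAt.fun_sum (u := Finset.univ) fun x _ =>
    (hdiff x).hasDerivAt.mul_const_sub_log (F x) (hq₀ x)
  rw [Finset.sum_sub_distrib, hscore, sub_zero] at hsum
  simpa only [mul_deriv_log_eq_deriv (hdiff _) (hq₀ _)] using hsum
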